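/- For positive integers l, m and nonnegative integer p, the sum of q^{x_1+...+x_m} over weakly increasing nonnegative integer tuples with x_m ≤ p + min(x_1, l−1) and additionally x_1 ≤ l−2 equals (1 + q^m + q^{2m} + ... + q^{(l−2)m}) · [p+m−1 choose m−1]_q. -/

import Mathlib

open Finset

noncomputable def q : RatFunc ℚ := RatFunc.X

noncomputable def qInt (n : ℕ) : RatFunc ℚ := ∑ i ∈ Finset.range n, q ^ i

noncomputable def qPoch (n : ℕ) : RatFunc ℚ := ∏ i ∈ Finset.range n, (1 - q ^ (i + 1))

noncomputable def qb (n m : ℕ) : RatFunc ℚ := qPoch n / (qPoch m * qPoch (n - m))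

/-!
Split the sum according to the first entry `x₁ = j < l - 1`. On that fiber the constraint reads
`x_m ≤ p + j`, and subtracting `j` from `x₂, …, x_m` identifies it with the weakly increasing
`(m - 1)`-tuples in `{0, …, p}`, with an extra weight `q ^ (j m)`. The generating function of
those tuples is `[p + m - 1, m - 1]_q`: splitting on whether the last entry is maximal gives the
q-Pascal recursion.
-/

lemma one_sub_q_pow_ne_zero {i : ℕ} (hi : i ≠ 0) : 1 - q ^ i ≠ 0 := by
  have hpoly : (1 - Polynomial.X ^ i : Polynomial ℚ) ≠ 0 := fun h => by
    simpa [zero_pow hi] using congrArg (Polynomial.eval 0) h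
  simpa [q, ← RatFunc.algebraMap_X] using
    (RatFunc.algebraMap_ne_zero hpoly : algebraMap _ (RatFunc ℚ) _ ≠ 0)

lemma qPoch_ne_zero (n : ℕ) : qPoch n ≠ 0 :=
  prod_ne_zero_iff.2 fun _ _ => one_sub_q_pow_ne_zero (Nat.succ_ne_zero _)

lemma qPoch_zero : qPoch 0 = 1 := prod_range_zero _

lemma qPoch_succ (n : ℕ) : qPoch (n + 1) = qPoch n * (1 - q ^ (n + 1)) := prod_range_succ _ _

lemma qb_zero_right (n : ℕ) : qb n 0 = 1 := by
  rw [qb, qPoch_zero, one_mul, Nat.sub_zero, div_self (qPoch_ne_zero n)]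

lemma qb_self (n : ℕ) : qb n n = 1 := by
  rw [qb, Nat.sub_self, qPoch_zero, mul_one, div_self (qPoch_ne_zero n)]

lemma qb_succ_succ (n k : ℕ) :
    qb (n + k + 2) (k + 1) = qb (n + k + 1) (k + 1) + q ^ (n + 1) * qb (n + k + 1) k := by
  rw [qb, qb, qb, show n + k + 2 - (k + 1) = n + 1 by omega, show n + k + 1 - (k + 1) = n by omega,
    show n + k + 1 - k = n + 1 by omega, qPoch_succ (n + k + 1), qPoch_succ n, qPoch_succ k]
  have := one_sub_q_pow_ne_zero (Nat.succ_ne_zero n)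
  have := one_sub_q_pow_ne_zero (Nat.succ_ne_zero k)
  field_simp [qPoch_ne_zero]
  ring

lemma Fin.monotone_cons_iff {α : Type*} [Preorder α] {k : ℕ} {a : α} {f : Fin k → α} :
    Monotone (Fin.cons a f : Fin (k + 1) → α) ↔ (∀ i, a ≤ f i) ∧ Monotone f := by
  refine ⟨fun h => ⟨fun i => by simpa using h (Fin.zero_le i.succ), fun i j hij => by
    simpa using h (Fin.succ_le_succ_iff.2 hij)⟩, fun ⟨ha, hf⟩ i j hij => ?_⟩
  cases i using Fin.cases with
  | zero => cases j using Fin.cases with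
    | zero => exact le_rfl
    | succ j => simpa using ha j
  | succ i => cases j using Fin.cases with
    | zero => exact absurd hij (by simp)
    | succ j => simpa using hf (Fin.succ_le_succ_iff.1 hij)

lemma Fin.monotone_snoc_iff {α : Type*} [Preorder α] {k : ℕ} {a : α} {f : Fin k → α} :
    Monotone (Fin.snoc f a : Fin (k + 1) → α) ↔ Monotone f ∧ ∀ i, f i ≤ a := by
  refine ⟨fun h => ⟨fun i j hij => by simpa using h (Fin.castSucc_le_castSucc_iff.2 hij),
    fun i => by simpa using h (Fin.le_last i.castSucc)⟩, fun ⟨hf, ha⟩ i j hij => ?_⟩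
  cases j using Fin.lastCases with
  | last => cases i using Fin.lastCases with
    | last => exact le_rfl
    | cast i => simpa using ha i
  | cast j => cases i using Fin.lastCases with
    | last => exact absurd hij (by simp)
    | cast i => simpa using hf (Fin.castSucc_le_castSucc_iff.1 hij)

noncomputable def monotoneTupleGF (n k : ℕ) : RatFunc ℚ :=
  ∑ x ∈ (univ : Finset (Fin k → Fin (n + 1))).filter Monotone, q ^ ∑ i, (x i : ℕ)

lemma monotoneTupleGF_zero_right (n : ℕ) : monotoneTupleGF n 0 = 1 := by
  simp [monotoneTupleGF,
    filter_true_of_mem fun (x : Fin 0 → Fin (n + 1)) _ => Subsingleton.monotone x]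

lemma monotoneTupleGF_zero_left (k : ℕ) : monotoneTupleGF 0 k = 1 := by
  simp [monotoneTupleGF, filter_true_of_mem fun (x : Fin k → Fin 1) _ => Subsingleton.monotone' x]

lemma sum_monotone_last_eq_top (n k : ℕ) :
    ∑ x ∈ (univ : Finset (Fin (k + 1) → Fin (n + 2))).filter
        (fun x => Monotone x ∧ x (Fin.last k) = Fin.last (n + 1)), q ^ ∑ i, (x i : ℕ) =
      q ^ (n + 1) * monotoneTupleGF (n + 1) k := by
  rw [monotoneTupleGF, mul_sum]
  refine sum_nbij' Fin.init (fun y => Fin.snoc y (Fin.last (n + 1))) ?_ ?_ ?_ ?_ ?_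
  · simp only [mem_filter, mem_univ, true_and]
    exact fun x hx => hx.1.comp (Fin.strictMono_castSucc.monotone)
  · simp only [mem_filter, mem_univ, true_and, Fin.snoc_last, and_true]
    exact fun y hy => Fin.monotone_snoc_iff.2 ⟨hy, fun i => Fin.le_last _⟩
  · simp only [mem_filter, mem_univ, true_and]
    intro x hx
    conv_rhs => rw [← Fin.snoc_init_self x, hx.2]
  · simp
  · simp only [mem_filter, mem_univ, true_and]
    intro x hx
    rw [Fin.sum_univ_castSucc, hx.2, pow_add, mul_comm]
    rfl

lemma sum_monotone_last_ne_top (n k : ℕ) :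
    ∑ x ∈ (univ : Finset (Fin (k + 1) → Fin (n + 2))).filter
        (fun x => Monotone x ∧ x (Fin.last k) ≠ Fin.last (n + 1)), q ^ ∑ i, (x i : ℕ) =
      monotoneTupleGF n (k + 1) := by
  symm
  refine sum_nbij (fun y => Fin.castSucc ∘ y) ?_ ?_ ?_ ?_
  · simp only [mem_filter, mem_univ, true_and, Function.comp_apply]
    exact fun y hy => ⟨Fin.strictMono_castSucc.monotone.comp hy, Fin.castSucc_ne_last _⟩
  · exact (Fin.castSucc_injective _).comp_left.injOn
  · intro x hx
    simp only [coe_filter, mem_univ, true_and, Set.mem_ofPred_eq] at hx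
    have hne (i) : x i ≠ Fin.last (n + 1) :=
      (lt_of_le_of_lt (hx.1 (Fin.le_last i)) (Fin.lt_last_iff_ne_last.2 hx.2)).ne
    refine ⟨fun i => (x i).castPred (hne i), ?_, funext fun i => Fin.castSucc_castPred _ _⟩
    simp only [coe_filter, mem_univ, true_and, Set.mem_ofPred_eq]
    exact fun i j hij => Fin.castPred_le_castPred_iff.2 (hx.1 hij)
  · intro y _
    rfl

lemma monotoneTupleGF_succ_succ (n k : ℕ) :
    monotoneTupleGF (n + 1) (k + 1) =
      monotoneTupleGF n (k + 1) + q ^ (n + 1) * monotoneTupleGF (n + 1) k := by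
  rw [monotoneTupleGF,
    ← sum_filter_add_sum_filter_not _ (fun x => x (Fin.last k) = Fin.last (n + 1)),
    filter_filter, filter_filter, sum_monotone_last_eq_top, sum_monotone_last_ne_top, add_comm]

theorem monotoneTupleGF_eq_qb (n k : ℕ) : monotoneTupleGF n k = qb (n + k) k := by
  induction k generalizing n with
  | zero => rw [monotoneTupleGF_zero_right, qb_zero_right]
  | succ k ihk =>
    induction n with
    | zero => rw [monotoneTupleGF_zero_left, Nat.zero_add, qb_self]
    | succ n ihn =>
      rw [monotoneTupleGF_succ_succ, ihn, ihk, show n + 1 + (k + 1) = n + k + 2 by ring,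
        show n + (k + 1) = n + k + 1 by ring, show n + 1 + k = n + k + 1 by ring, qb_succ_succ]

lemma sum_monotone_head_eq (k N j p : ℕ) (h : j + p < N) :
    ∑ x ∈ (univ : Finset (Fin (k + 1) → Fin N)).filter
        (fun x : Fin (k + 1) → Fin N =>
          Monotone x ∧ (x 0 : ℕ) = j ∧ (x (Fin.last k) : ℕ) ≤ j + p),
        q ^ ∑ i, (x i : ℕ) =
      q ^ (j * (k + 1)) * monotoneTupleGF p k := by
  rw [monotoneTupleGF, mul_sum]
  symm
  refine sum_nbij (fun y => Fin.cons ⟨j, by omega⟩ fun i => ⟨y i + j, by omega⟩) ?_ ?_ ?_ ?_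
  · simp only [mem_filter, mem_univ, true_and]
    intro y hy
    refine ⟨Fin.monotone_cons_iff.2 ⟨fun i => by simp [Fin.le_def], fun a b hab => ?_⟩, rfl,
      ?_⟩
    · have := hy hab
      rw [Fin.le_def] at this ⊢
      simp only
      omega
    · cases k with
      | zero => simp
      | succ k =>
        have := (y (Fin.last k)).isLt
        simp only [← Fin.succ_last, Fin.cons_succ]
        omega
  · intro y _ y' _ hyy'
    funext i
    simpa [Fin.ext_iff] using congrFun (Fin.cons_right_injective _ hyy') i
  · intro x hx
    simp only [coe_filter, mem_univ, true_and, Set.mem_ofPred_eq] at hx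
    obtain ⟨hmono, hx0, hlast⟩ := hx
    have hge (i : Fin k) : j ≤ x i.succ := hx0 ▸ hmono (Fin.zero_le _)
    have hle (i : Fin k) : (x i.succ : ℕ) ≤ j + p :=
      (Fin.le_def.1 (hmono (Fin.le_last _))).trans hlast
    refine ⟨fun i => ⟨x i.succ - j, by have := hle i; omega⟩, ?_, ?_⟩
    · simp only [coe_filter, mem_univ, true_and, Set.mem_ofPred_eq]
      intro a b hab
      simpa [Fin.le_def] using Nat.sub_le_sub_right (hmono (Fin.succ_le_succ_iff.2 hab)) j
    · funext i
      cases i using Fin.cases with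
      | zero => exact Fin.ext hx0.symm
      | succ i => exact Fin.ext (Nat.sub_add_cancel (hge i))
  · intro y _
    simp only [Fin.sum_univ_succ, Fin.cons_zero, Fin.cons_succ, sum_add_distrib, sum_const,
      card_univ, Fintype.card_fin, smul_eq_mul, ← pow_add]
    congr 1
    ring

theorem stmt8 (l m p : ℕ) (hm : 0 < m) :
    ∑ x ∈ (Finset.univ : Finset (Fin m → Fin (p + l))).filter
        (fun x => Monotone x ∧
          (x ⟨m - 1, by omega⟩).val ≤ p + min (x ⟨0, hm⟩).val (l - 1) ∧
          (x ⟨0, hm⟩).val < l - 1),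
      q ^ (∑ i : Fin m, (x i : ℕ)) =
    (∑ k ∈ Finset.range (l - 1), q ^ (k * m)) * qb (p + m - 1) (m - 1) := by
  obtain ⟨k, rfl⟩ : ∃ k, m = k + 1 := ⟨m - 1, by omega⟩
  have hlast : (⟨k + 1 - 1, by omega⟩ : Fin (k + 1)) = Fin.last k := Fin.ext (by simp)
  have hmaps : ∀ x ∈ (univ : Finset (Fin (k + 1) → Fin (p + l))).filter
      (fun x => Monotone x ∧ (x (Fin.last k)).val ≤ p + min (x 0).val (l - 1) ∧
        (x 0).val < l - 1),
      (x 0 : ℕ) ∈ range (l - 1) := fun x hx => mem_range.2 (mem_filter.1 hx).2.2.2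
  simp only [hlast, Fin.zero_eta]
  rw [Nat.add_sub_cancel, show p + (k + 1) - 1 = p + k by omega, ← monotoneTupleGF_eq_qb,
    ← sum_fiberwise_of_maps_to hmaps, sum_mul]
  refine sum_congr rfl fun j hj => ?_
  rw [mem_range] at hj
  rw [filter_filter, ← sum_monotone_head_eq k (p + l) j p (by omega)]
  refine sum_congr (filter_congr fun x _ => ?_) fun _ _ => rfl
  constructor
  · rintro ⟨⟨hmono, hbound, -⟩, hx0⟩
    exact ⟨hmono, hx0, by omega⟩
  · rintro ⟨hmono, hx0, hbound⟩
    exact ⟨⟨hmono, by omega, by omega⟩, hx0⟩
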